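/- arXiv:1609.00632 — 2 statements merged into one kernel-verified Lean document; each statement's English description precedes it below -/
import Mathlib

section
/- For every natural number h, there exists a finite simple graph G on a nonempty vertex set such that every vertex of G has degree exactly 3 and the girth of G is at least h. -/
/-!
The reflections in the three sides of the ideal triangle with vertices `0, 1, ∞` are integer
matrices, and by ping-pong on the three boundary arcs they cut out, every nonempty reduced word
in them is a nontrivial element of `GL₂(ℤ)`. Such a word of length `L` has entries of size at
most `3 ^ L`, so it stays nontrivial modulo any `n > 3 ^ L + 1`. A cycle of length `L` in the
Cayley graph of the three reductions in `GL₂(ℤ/n)` spells a nonempty reduced word with product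
`1`; hence for `n = 3 ^ (h + 2) + 2` this Cayley graph is cubic of girth at least `h`.
-/

open Set Function

section PingPong

variable {ι M α : Type*} [Monoid M] [MulAction M α] {s : ι → M} {X : ι → Set α}

theorem prod_smul_mem_of_ping_pong (hmaps : ∀ i j, i ≠ j → MapsTo (s i • ·) (X j) (X i))
    {i j : ι} {x : List ι} (hred : (i :: x).IsChain (· ≠ ·))
    (hj : (i :: x).getLast (List.cons_ne_nil i x) ≠ j) {p : α} (hp : p ∈ X j) :
    ((i :: x).map s).prod • p ∈ X i := by
  induction x generalizing i with
  | nil => simpa using hmaps i j hj hp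
  | cons k x ih =>
    rw [List.isChain_cons_cons] at hred
    rw [List.getLast_cons_cons] at hj
    rw [List.map_cons, List.prod_cons, mul_smul]
    exact hmaps i k hred.1 (ih hred.2 hj)

theorem prod_ne_one_of_ping_pong (hmaps : ∀ i j, i ≠ j → MapsTo (s i • ·) (X j) (X i))
    (hdisj : Pairwise (Disjoint on X)) (hX : ∀ i, (X i).Nonempty) (hι : 3 ≤ ENat.card ι)
    {x : List ι} (hx : x ≠ []) (hred : x.IsChain (· ≠ ·)) : (x.map s).prod ≠ 1 := by
  obtain ⟨i, x, rfl⟩ := List.exists_cons_of_ne_nil hx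
  obtain ⟨j, hji, hjl⟩ := ENat.exists_ne_ne_of_three_le hι i ((i :: x).getLast hx)
  obtain ⟨p, hp⟩ := hX j
  intro h
  have hpi := prod_smul_mem_of_ping_pong hmaps hred (Ne.symm hjl) hp
  rw [h, one_smul] at hpi
  exact (hdisj hji).ne_of_mem hp hpi rfl

end PingPong

namespace SimpleGraph

variable {G ι : Type*} [Group G] {s : ι → G}

theorem mulCayley_range_adj (hs : ∀ i, s i * s i = 1) {u v : G} :
    (mulCayley (range s)).Adj u v ↔ u ≠ v ∧ ∃ i, u * s i = v := by
  rw [mulCayley_adj']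
  refine and_congr_right fun _ => ⟨?_, fun ⟨i, h⟩ => ⟨s i, mem_range_self i, Or.inl h⟩⟩
  rintro ⟨_, ⟨i, rfl⟩, h | rfl⟩
  · exact ⟨i, h⟩
  · exact ⟨i, by rw [mul_assoc, hs, mul_one]⟩

theorem neighborSet_mulCayley_range (hs : ∀ i, s i * s i = 1) (hne : ∀ i, s i ≠ 1) (v : G) :
    (mulCayley (range s)).neighborSet v = range (v * s ·) := by
  ext w
  simp only [mem_neighborSet, mulCayley_range_adj hs, mem_range]
  refine ⟨fun ⟨_, i, h⟩ => ⟨i, h⟩, fun ⟨i, h⟩ => ⟨?_, i, h⟩⟩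
  rw [← h, ne_eq, left_eq_mul]
  exact hne i

theorem ncard_neighborSet_mulCayley_range (hs : ∀ i, s i * s i = 1) (hinj : Injective s)
    (hne : ∀ i, s i ≠ 1) (v : G) :
    ((mulCayley (range s)).neighborSet v).ncard = Nat.card ι := by
  rw [neighborSet_mulCayley_range hs hne,
    ncard_range_of_injective (f := fun i => v * s i) ((mul_right_injective v).comp hinj)]

theorem Walk.prod_map_darts_inv_mul {H : SimpleGraph G} {u v : G} (p : H.Walk u v) :
    (p.darts.map fun d => d.fst⁻¹ * d.snd).prod = u⁻¹ * v := by
  induction p with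
  | nil => simp
  | cons _ p ih => simp [ih, mul_assoc]

theorem exists_reduced_word_of_isTrail (hs : ∀ i, s i * s i = 1) {u v : G}
    {p : (mulCayley (range s)).Walk u v} (hp : p.IsTrail) :
    ∃ x : List ι,
      x.length = p.length ∧ x.IsChain (· ≠ ·) ∧ (x.map s).prod = u⁻¹ * v := by
  have hstep (d : (mulCayley (range s)).Dart) : ∃ i, s i = d.fst⁻¹ * d.snd := by
    obtain ⟨-, i, hi⟩ := (mulCayley_range_adj hs).1 d.adj
    exact ⟨i, by rw [← hi, inv_mul_cancel_left]⟩
  choose idx hidx using hstep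
  refine ⟨p.darts.map idx, by simp, ?_, ?_⟩
  · have hedges : p.darts.Pairwise (fun d d' => d.edge ≠ d'.edge) := by
      have := hp.edges_nodup
      rwa [Walk.edges_eq_map_darts, List.nodup_iff_pairwise_ne, List.pairwise_map] at this
    rw [List.isChain_map, List.isChain_iff_forall_rel_of_append_cons_cons]
    intro d d' l₁ l₂ hsplit hidx_eq
    have hadj : d.snd = d'.fst :=
      List.isChain_iff_forall_rel_of_append_cons_cons.1 p.isChain_dartAdj_darts hsplit
    refine List.isChain_iff_forall_rel_of_append_cons_cons.1 hedges.isChain hsplit ?_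
    have hback : d'.snd = d.fst :=
      calc d'.snd = d'.fst * s (idx d') := by rw [hidx d', mul_inv_cancel_left]
        _ = d.snd * (s (idx d))⁻¹ := by
          rw [← hadj, ← hidx_eq, ← eq_inv_of_mul_eq_one_left (hs _)]
        _ = d.fst := by rw [hidx d, mul_inv_rev, inv_inv, mul_inv_cancel_left]
    rw [Dart.edge, Dart.edge, ← hadj, hback, Sym2.eq_swap]
  · rw [List.map_map]
    exact (congrArg List.prod (List.map_congr_left fun d _ => hidx d)).trans
      p.prod_map_darts_inv_mul

theorem le_egirth_mulCayley_range (hs : ∀ i, s i * s i = 1) {h : ℕ}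
    (hfree : ∀ x : List ι, x ≠ [] → x.IsChain (· ≠ ·) → x.length < h →
      (x.map s).prod ≠ 1) :
    (h : ℕ∞) ≤ (mulCayley (range s)).egirth := by
  refine le_egirth.2 fun a c hc => ?_
  by_contra hlt
  obtain ⟨x, hlen, hred, hprod⟩ := exists_reduced_word_of_isTrail hs hc.isTrail
  refine hfree x ?_ hred (by exact_mod_cast hlen ▸ not_le.1 hlt) (hprod.trans (inv_mul_cancel a))
  rw [← List.length_pos_iff, hlen]
  exact hc.three_le_length.trans_lt' (by norm_num)

end SimpleGraph

open Matrix

attribute [local instance] Matrix.linftyOpSeminormedAddCommGroup in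
theorem Matrix.norm_entry_le_linfty_opNorm {m n α : Type*} [Fintype m] [Fintype n]
    [SeminormedAddCommGroup α] (A : Matrix m n α) (i : m) (j : n) : ‖A i j‖ ≤ ‖A‖ := by
  rw [← coe_nnnorm, ← coe_nnnorm, linfty_opNNNorm_def, NNReal.coe_le_coe]
  exact (Finset.single_le_sum (fun _ _ => zero_le) (Finset.mem_univ j)).trans
    (Finset.le_sup (f := fun i => ∑ k, ‖A i k‖₊) (Finset.mem_univ i))

theorem Matrix.map_intCast_ne_one {m : Type*} [Fintype m] [DecidableEq m] {n : ℕ}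
    {A : Matrix m m ℤ} (hA : A ≠ 1) (hbound : ∀ i j, |A i j| + 1 < n) :
    A.map (Int.cast : ℤ → ZMod n) ≠ 1 := by
  refine fun h => hA (Matrix.ext fun i j =>
    sub_eq_zero.mp (Int.eq_zero_of_abs_lt_dvd (m := n) ?_ ?_))
  · rw [← ZMod.intCast_zmod_eq_zero_iff_dvd, Int.cast_sub, sub_eq_zero]
    simpa [Matrix.one_apply, apply_ite] using congr_fun₂ h i j
  · calc |A i j - (1 : Matrix m m ℤ) i j| ≤ |A i j| + |(1 : Matrix m m ℤ) i j| := abs_sub _ _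
      _ ≤ |A i j| + 1 := by gcongr; rw [Matrix.one_apply]; split_ifs <;> simp
      _ < n := hbound i j

/-- The reflections `z ↦ -z̄`, `z ↦ 2 - z̄` and `z ↦ z̄ / (2z̄ - 1)` of the upper half plane in the
sides `(0, ∞)`, `(1, ∞)` and `(0, 1)` of the ideal triangle with vertices `0, 1, ∞`. -/
def idealTriangleReflection : Fin 3 → Matrix (Fin 2) (Fin 2) ℤ :=
  ![!![-1, 0; 0, 1], !![-1, 2; 0, 1], !![1, 0; 2, -1]]

/-- Writing `p` for the point `p 0 / p 1` of `ℝ ∪ {∞}`, these are the arcs `(-∞, 0)`, `(1, ∞)`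
and `(0, 1)`, lying beyond the sides of the ideal triangle fixed by the respective reflections. -/
def idealTriangleArc : Fin 3 → Set (Fin 2 → ℤ) :=
  ![{p | p 0 * p 1 < 0}, {p | p 1 ^ 2 < p 0 * p 1}, {p | 0 < p 0 * p 1 ∧ p 0 * p 1 < p 1 ^ 2}]

theorem idealTriangleReflection_mul_self (i : Fin 3) :
    idealTriangleReflection i * idealTriangleReflection i = 1 := by
  fin_cases i <;> decide

theorem mapsTo_idealTriangleArc {i j : Fin 3} (hij : i ≠ j) :
    MapsTo (idealTriangleReflection i *ᵥ ·) (idealTriangleArc j) (idealTriangleArc i) := by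
  intro p hp
  fin_cases i <;> fin_cases j <;> simp at hij <;>
    simp_all [idealTriangleReflection, idealTriangleArc, dotProduct, Fin.sum_univ_two] <;>
    (try constructor) <;> nlinarith [sq_nonneg (p 0), sq_nonneg (p 1), sq_nonneg (p 0 - p 1)]

theorem pairwise_disjoint_idealTriangleArc : Pairwise (Disjoint on idealTriangleArc) := by
  intro i j hij
  rw [onFun, Set.disjoint_left]
  intro p hi hj
  fin_cases i <;> fin_cases j <;> simp at hij <;> simp_all [idealTriangleArc] <;> nlinarith

theorem idealTriangleArc_nonempty (i : Fin 3) : (idealTriangleArc i).Nonempty := by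
  fin_cases i
  · exact ⟨![-1, 1], by simp [idealTriangleArc]⟩
  · exact ⟨![2, 1], by simp [idealTriangleArc]⟩
  · exact ⟨![1, 2], by simp [idealTriangleArc]⟩

theorem prod_idealTriangleReflection_ne_one {x : List (Fin 3)} (hx : x ≠ [])
    (hred : x.IsChain (· ≠ ·)) : (x.map idealTriangleReflection).prod ≠ 1 := by
  have hlin := prod_ne_one_of_ping_pong (s := fun i => toLin' (idealTriangleReflection i))
    (fun i j hij => by simpa [Module.End.smul_def] using mapsTo_idealTriangleArc hij)
    pairwise_disjoint_idealTriangleArc idealTriangleArc_nonempty (by simp) hx hred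
  intro h
  apply hlin
  have := map_list_prod Matrix.toLinAlgEquiv' (x.map idealTriangleReflection)
  rw [h, map_one, List.map_map] at this
  exact this.symm

section LinftyOpNorm

attribute [local instance] Matrix.linftyOpNormedRing

theorem norm_idealTriangleReflection_le (i : Fin 3) : ‖idealTriangleReflection i‖ ≤ 3 := by
  rw [← coe_nnnorm, linfty_opNNNorm_def]
  norm_cast
  refine Finset.sup_le fun k _ => ?_
  have h2 : ‖(2 : ℤ)‖₊ = 2 := Int.nnnorm_natCast 2
  fin_cases i <;> fin_cases k <;> simp [idealTriangleReflection, Fin.sum_univ_two, h2] <;> norm_num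

theorem norm_prod_idealTriangleReflection_le (x : List (Fin 3)) :
    ‖(x.map idealTriangleReflection).prod‖ ≤ 3 ^ x.length := by
  induction x with
  | nil => simp
  | cons i x ih =>
    rw [List.map_cons, List.prod_cons, List.length_cons, pow_succ']
    exact (norm_mul_le _ _).trans
      (mul_le_mul (norm_idealTriangleReflection_le i) ih (norm_nonneg _) (by norm_num))

theorem abs_prod_idealTriangleReflection_le (x : List (Fin 3)) (i j : Fin 2) :
    (|(x.map idealTriangleReflection).prod i j| : ℝ) ≤ 3 ^ x.length := by
  have := (norm_entry_le_linfty_opNorm _ i j).trans (norm_prod_idealTriangleReflection_le x)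
  rwa [Int.norm_eq_abs] at this

end LinftyOpNorm

def idealTriangleReflectionUnit (i : Fin 3) : GL (Fin 2) ℤ :=
  ⟨idealTriangleReflection i, idealTriangleReflection i,
    idealTriangleReflection_mul_self i, idealTriangleReflection_mul_self i⟩

def idealTriangleReflectionMod (n : ℕ) (i : Fin 3) : GL (Fin 2) (ZMod n) :=
  GeneralLinearGroup.map (Int.castRingHom (ZMod n)) (idealTriangleReflectionUnit i)

theorem idealTriangleReflectionMod_mul_self (n : ℕ) (i : Fin 3) :
    idealTriangleReflectionMod n i * idealTriangleReflectionMod n i = 1 := by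
  rw [idealTriangleReflectionMod, ← map_mul,
    show idealTriangleReflectionUnit i * idealTriangleReflectionUnit i = 1 from
      Units.ext (idealTriangleReflection_mul_self i), map_one]

theorem prod_idealTriangleReflectionMod_ne_one {n : ℕ} {x : List (Fin 3)} (hx : x ≠ [])
    (hred : x.IsChain (· ≠ ·)) (hn : 3 ^ x.length + 1 < n) :
    (x.map (idealTriangleReflectionMod n)).prod ≠ 1 := by
  have hbound (i j : Fin 2) : |(x.map idealTriangleReflection).prod i j| + 1 < n := by
    have hn' : (3 : ℝ) ^ x.length + 1 < n := by exact_mod_cast hn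
    have := abs_prod_idealTriangleReflection_le x i j
    exact_mod_cast (by linarith : (|(x.map idealTriangleReflection).prod i j| : ℝ) + 1 < n)
  have hcoe : (x.map idealTriangleReflection).prod =
      ((x.map idealTriangleReflectionUnit).prod : Matrix (Fin 2) (Fin 2) ℤ) := by
    rw [← Units.coeHom_apply, map_list_prod, List.map_map]
    rfl
  have hmap : x.map (idealTriangleReflectionMod n) =
      (x.map idealTriangleReflectionUnit).map (GeneralLinearGroup.map (Int.castRingHom _)) := by
    rw [List.map_map]
    rfl
  intro h
  rw [hmap, ← map_list_prod] at h
  refine map_intCast_ne_one (prod_idealTriangleReflection_ne_one hx hred) hbound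
    (Matrix.ext fun i j => ?_)
  simpa [hcoe, GeneralLinearGroup.map_apply, Matrix.one_apply] using
    congr_arg (fun g : GL (Fin 2) (ZMod n) => g i j) h

theorem idealTriangleReflectionMod_ne_one {n : ℕ} (hn : 4 < n) (i : Fin 3) :
    idealTriangleReflectionMod n i ≠ 1 := by
  simpa using prod_idealTriangleReflectionMod_ne_one (x := [i]) (by simp) (by simp) hn

theorem idealTriangleReflectionMod_injective {n : ℕ} (hn : 10 < n) :
    Injective (idealTriangleReflectionMod n) := by
  intro i j hij
  by_contra hne
  refine prod_idealTriangleReflectionMod_ne_one (x := [i, j]) (by simp) (by simpa using hne)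
    (by simpa using hn) ?_
  simp [← hij, idealTriangleReflectionMod_mul_self]

/-- (Erdős–Sachs) For every `h` there is a finite nonempty cubic (3-regular) simple
graph whose girth (as an extended natural number, `⊤` for acyclic graphs) is at
least `h`. -/
theorem exists_cubic_graph_large_girth (h : ℕ) :
    ∃ (V : Type) (G : SimpleGraph V), Finite V ∧ Nonempty V ∧
      (∀ v : V, (G.neighborSet v).ncard = 3) ∧ (h : ℕ∞) ≤ G.egirth := by
  set n := 3 ^ (h + 2) + 2
  have hfree (x : List (Fin 3)) (hx : x ≠ []) (hred : x.IsChain (· ≠ ·))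
      (hlen : x.length ≤ h + 2) :
      (x.map (idealTriangleReflectionMod n)).prod ≠ 1 :=
    prod_idealTriangleReflectionMod_ne_one hx hred
      (by have := Nat.pow_le_pow_right (by norm_num : 0 < 3) hlen; omega)
  have h9 : 9 ≤ 3 ^ (h + 2) := by rw [pow_add]; exact Nat.le_mul_of_pos_left 9 (by positivity)
  have : NeZero n := ⟨by positivity⟩
  refine ⟨GL (Fin 2) (ZMod n), SimpleGraph.mulCayley (range (idealTriangleReflectionMod n)),
    inferInstance, ⟨1⟩, fun v => ?_, ?_⟩
  · rw [SimpleGraph.ncard_neighborSet_mulCayley_range (idealTriangleReflectionMod_mul_self n)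
      (idealTriangleReflectionMod_injective (by omega))
      (idealTriangleReflectionMod_ne_one (by omega)), Nat.card_fin]
  · exact SimpleGraph.le_egirth_mulCayley_range (idealTriangleReflectionMod_mul_self n)
      fun x hx hred hlen => hfree x hx hred (by omega)
end

section
/- Let G be a simple graph, let k be a natural number, and suppose the girth of G is strictly greater than 2k + 1 (as an extended natural number). Then for every vertex v of G, the subgraph of G induced on the set of vertices at graph distance at most k from v is acyclic. -/
/-!
Let `c` be a cycle inside the ball and `a` a vertex of `c` farthest from `v`, at distance
`d ≤ k`. If a cycle neighbour `b` of `a` is also at distance `d`, shortest walks from `v` to `a`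
and to `b` together with the edge `ab` contain a cycle of length at most `2d + 1`. Otherwise both
cycle neighbours `b ≠ b'` of `a` are at distance at most `d - 1`, and shortest walks to them
together with `b a b'` contain a cycle of length at most `2d`. In either case the girth is at most
`2k + 1`. The cycles are extracted by bypassing a closed walk that uses some edge only once;
that edge avoids the shortest walks because every vertex on them other than the endpoint is
strictly closer to `v`.
-/

open SimpleGraph Walk

namespace SimpleGraph

variable {V : Type*} {G : SimpleGraph V}

lemma Walk.dist_lt_of_length_eq_dist {v x w : V} {p : G.Walk v x}
    (hp : p.length = G.dist v x) (hw : w ∈ p.support) (hwx : w ≠ x) :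
    G.dist v w < G.dist v x := by
  classical
  rw [← length_eq_dist_of_subwalk hp (p.isSubwalk_takeUntil hw), ← hp]
  exact length_takeUntil_lt_length hw hwx

lemma egirth_le_length_add_one_of_notMem_edges {u x : V} (h : G.Adj u x) (p : G.Walk x u)
    (he : s(u, x) ∉ p.edges) : G.egirth ≤ p.length + 1 := by
  classical
  have hcycle := Path.cons_isCycle p.toPath h fun he' ↦ he (p.edges_toPath_subset_edges he')
  have hlen : (p.toPath : G.Walk x u).length ≤ p.length := p.length_bypass_le_length
  refine (egirth_le_length hcycle).trans ?_
  simpa using hlen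

lemma Adj.egirth_le_two_mul_dist_add_one_of_dist_eq {v x y : V} (hxy : G.Adj x y)
    (hx : G.Reachable v x) (hd : G.dist v x = G.dist v y) : G.egirth ≤ 2 * G.dist v x + 1 := by
  obtain ⟨p, hp⟩ := hx.exists_walk_length_eq_dist
  obtain ⟨q, hq⟩ := (hx.trans hxy.reachable).exists_walk_length_eq_dist
  have he : s(x, y) ∉ (q.reverse.append p).edges := by
    rw [edges_append, edges_reverse, List.mem_append, List.mem_reverse]
    rintro (he | he)
    · exact (q.dist_lt_of_length_eq_dist hq (q.fst_mem_support_of_mem_edges he) hxy.ne).ne hd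
    · exact (p.dist_lt_of_length_eq_dist hp (p.snd_mem_support_of_mem_edges he) hxy.ne').ne hd.symm
  calc G.egirth ≤ (q.reverse.append p).length + 1 :=
        egirth_le_length_add_one_of_notMem_edges hxy _ he
    _ = 2 * G.dist v x + 1 := by simp [hp, hq, ← hd, two_mul]

lemma egirth_le_dist_add_dist_add_two {v a b b' : V} (hab : G.Adj a b) (hab' : G.Adj a b')
    (hbb' : b ≠ b') (hb : G.dist v b < G.dist v a) (hb' : G.dist v b' < G.dist v a) :
    G.egirth ≤ G.dist v b + G.dist v b' + 2 := by
  have ha : G.Reachable v a := Reachable.of_dist_ne_zero (by omega)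
  obtain ⟨p, hp⟩ := (ha.trans hab.reachable).exists_walk_length_eq_dist
  obtain ⟨p', hp'⟩ := (ha.trans hab'.reachable).exists_walk_length_eq_dist
  have he : s(a, b) ∉ ((p.reverse.append p').concat hab'.symm).edges := by
    rw [edges_concat, edges_append, edges_reverse, List.concat_eq_append, List.mem_append,
      List.mem_append, List.mem_reverse, List.mem_singleton]
    rintro ((he | he) | he)
    · exact (p.dist_lt_of_length_eq_dist hp (p.fst_mem_support_of_mem_edges he) hab.ne).not_gt hb
    · exact (p'.dist_lt_of_length_eq_dist hp' (p'.fst_mem_support_of_mem_edges he)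
        hab'.ne).not_gt hb'
    · rcases Sym2.eq_iff.mp he with ⟨-, rfl⟩ | ⟨-, rfl⟩
      · exact hab.ne rfl
      · exact hbb' rfl
  calc G.egirth ≤ ((p.reverse.append p').concat hab'.symm).length + 1 :=
        egirth_le_length_add_one_of_notMem_edges hab _ he
    _ = G.dist v b + G.dist v b' + 2 := by simp [hp, hp']; ring

lemma Walk.IsCycle.egirth_le_of_forall_dist_le {v u : V} {c : G.Walk u u} (hc : c.IsCycle)
    (hu : G.Reachable v u) {k : ℕ} (hk : ∀ w ∈ c.support, G.dist v w ≤ k) :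
    G.egirth ≤ 2 * k + 1 := by
  classical
  obtain ⟨a, ha, hmax⟩ := c.support.toFinset.exists_max_image (G.dist v)
    ⟨u, List.mem_toFinset.mpr c.start_mem_support⟩
  rw [List.mem_toFinset] at ha
  have hmax' : ∀ w ∈ (c.rotate a ha).support, G.dist v w ≤ G.dist v a := fun w hw ↦
    hmax w (List.mem_toFinset.mpr ((c.mem_support_rotate_iff a ha).mp hw))
  have hc' := hc.rotate ha
  have hb : G.dist v (c.rotate a ha).snd ≤ G.dist v a := hmax' _ (getVert_mem_support _ _)
  have hb' : G.dist v (c.rotate a ha).penultimate ≤ G.dist v a :=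
    hmax' _ (getVert_mem_support _ _)
  have hab := adj_snd hc'.not_nil
  have hab' := (adj_penultimate hc'.not_nil).symm
  have ha_reach : G.Reachable v a := hu.trans (c.takeUntil a ha).reachable
  have hak := hk a ha
  rcases hb.lt_or_eq with hb | hb
  · rcases hb'.lt_or_eq with hb' | hb'
    · have := egirth_le_dist_add_dist_add_two hab hab' hc'.snd_ne_penultimate hb hb'
      exact this.trans (by exact_mod_cast (by omega : _ + _ + 2 ≤ 2 * k + 1))
    · have := hab'.egirth_le_two_mul_dist_add_one_of_dist_eq ha_reach hb'.symm
      exact this.trans (by exact_mod_cast (by omega : 2 * G.dist v a + 1 ≤ 2 * k + 1))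
  · have := hab.egirth_le_two_mul_dist_add_one_of_dist_eq ha_reach hb.symm
    exact this.trans (by exact_mod_cast (by omega : 2 * G.dist v a + 1 ≤ 2 * k + 1))

end SimpleGraph

/-- If the girth of `G` is strictly greater than `2k + 1`, then for every vertex `v`
the subgraph induced on the ball of radius `k` around `v` is acyclic. -/
theorem induce_ball_isAcyclic_of_girth {V : Type*} (G : SimpleGraph V) (k : ℕ)
    (hg : 2 * (k : ℕ∞) + 1 < G.egirth) (v : V) :
    (G.induce {w : V | G.edist v w ≤ (k : ℕ∞)}).IsAcyclic := by
  intro u c hc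
  let f := Embedding.induce (G := G) {w : V | G.edist v w ≤ (k : ℕ∞)}
  have hball : ∀ w ∈ (c.map f.toHom).support, G.Reachable v w ∧ G.dist v w ≤ k := by
    intro _ hmem
    obtain ⟨⟨w, hw : G.edist v w ≤ k⟩, -, rfl⟩ := List.mem_map.mp (c.support_map f.toHom ▸ hmem)
    have hreach := reachable_of_edist_ne_top (hw.trans_lt (ENat.natCast_lt_top k)).ne
    exact ⟨hreach, by exact_mod_cast hreach.coe_dist_eq_edist ▸ hw⟩
  exact hg.not_ge ((hc.map f.injective).egirth_le_of_forall_dist_le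
    (hball _ (start_mem_support _)).1 fun w hw ↦ (hball w hw).2)
end
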